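/- The distribution q₅(A,B|a,b) = (2−√2)/8 + (√2/8)·(2δ_{A,B} + 2ab − 4ab·δ_{A,B}) does not admit a local hidden-variable factorization over any finite hidden variable space. -/
import Mathlib


/-- The quantum-simulation distribution q₅. -/
noncomputable def q5 (A B a b : ℝ) : ℝ :=
  (2 - Real.sqrt 2) / 8 +
  (Real.sqrt 2 / 8) * (2 * (if A = B then (1 : ℝ) else 0) + 2 * a * b -
    4 * a * b * (if A = B then (1 : ℝ) else 0))

private lemma chsh_bound (x0 x1 y0 y1 : ℝ)
    (hx0 : |x0| ≤ 1) (hx1 : |x1| ≤ 1) (hy0 : |y0| ≤ 1) (hy1 : |y1| ≤ 1) :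
    x0 * y0 + x0 * y1 + x1 * y0 - x1 * y1 ≤ 2 := by
  have key : ∀ x u : ℝ, |x| ≤ 1 → x * u ≤ |u| := fun x u hx =>
    (le_abs_self _).trans (by rw [abs_mul]; exact mul_le_of_le_one_left (abs_nonneg u) hx)
  have h1 := key x0 (y0 + y1) hx0
  have h2 := key x1 (y0 - y1) hx1
  have h3 : |y0 + y1| + |y0 - y1| ≤ 2 := by
    rcases abs_cases (y0 + y1) with ⟨e1, _⟩ | ⟨e1, _⟩ <;>
      rcases abs_cases (y0 - y1) with ⟨e2, _⟩ | ⟨e2, _⟩ <;>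
      rcases abs_le.mp hy0 with ⟨c0, c1⟩ <;> rcases abs_le.mp hy1 with ⟨d0, d1⟩ <;> linarith
  nlinarith [h1, h2, h3]

theorem q5_no_local_factorization :
    ¬ ∃ (Λ : Type) (_ : Fintype Λ) (p : Λ → ℝ) (qA qB : ℝ → ℝ → Λ → ℝ),
      (∀ l, 0 ≤ p l) ∧ (∑ l, p l = 1) ∧
      (∀ A ∈ ({-1, 1} : Set ℝ), ∀ a ∈ ({0, 1} : Set ℝ), ∀ l, 0 ≤ qA A a l) ∧
      (∀ a ∈ ({0, 1} : Set ℝ), ∀ l, qA (-1) a l + qA 1 a l = 1) ∧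
      (∀ B ∈ ({-1, 1} : Set ℝ), ∀ b ∈ ({0, 1} : Set ℝ), ∀ l, 0 ≤ qB B b l) ∧
      (∀ b ∈ ({0, 1} : Set ℝ), ∀ l, qB (-1) b l + qB 1 b l = 1) ∧
      (∀ A ∈ ({-1, 1} : Set ℝ), ∀ B ∈ ({-1, 1} : Set ℝ),
        ∀ a ∈ ({0, 1} : Set ℝ), ∀ b ∈ ({0, 1} : Set ℝ),
        q5 A B a b = ∑ l, p l * qA A a l * qB B b l) := by
  rintro ⟨Λ, _, p, qA, qB, hp, hps, hqAnn, hqAs, hqBnn, hqBs, hfac⟩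
  have h0 : (0:ℝ) ∈ ({0,1} : Set ℝ) := by norm_num
  have h1 : (1:ℝ) ∈ ({0,1} : Set ℝ) := by norm_num
  have hm : (-1:ℝ) ∈ ({-1,1} : Set ℝ) := by norm_num
  have hpl : (1:ℝ) ∈ ({-1,1} : Set ℝ) := by norm_num
  set s := Real.sqrt 2 with hsdef
  have hs2 : s^2 = 2 := Real.sq_sqrt (by norm_num)
  have hs0 : 0 ≤ s := Real.sqrt_nonneg 2
  -- correlators
  have hE : ∀ a ∈ ({0,1}:Set ℝ), ∀ b ∈ ({0,1}:Set ℝ),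
      ∑ l, p l * ((qA 1 a l - qA (-1) a l) * (qB 1 b l - qB (-1) b l))
        = q5 1 1 a b - q5 1 (-1) a b - q5 (-1) 1 a b + q5 (-1) (-1) a b := by
    intro a ha b hb
    rw [hfac 1 hpl 1 hpl a ha b hb, hfac 1 hpl (-1) hm a ha b hb,
        hfac (-1) hm 1 hpl a ha b hb, hfac (-1) hm (-1) hm a ha b hb,
        ← Finset.sum_sub_distrib, ← Finset.sum_sub_distrib, ← Finset.sum_add_distrib]
    exact Finset.sum_congr rfl fun l _ => by ring
  have E00 := hE 0 h0 0 h0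
  have E01 := hE 0 h0 1 h1
  have E10 := hE 1 h1 0 h0
  have E11 := hE 1 h1 1 h1
  -- CHSH bound
  have hxb : ∀ a ∈ ({0,1}:Set ℝ), ∀ l, |qA 1 a l - qA (-1) a l| ≤ 1 := by
    intro a ha l
    have h1' := hqAnn 1 hpl a ha l
    have h2' := hqAnn (-1) hm a ha l
    have h3' := hqAs a ha l
    rw [abs_le]; constructor <;> linarith
  have hyb : ∀ b ∈ ({0,1}:Set ℝ), ∀ l, |qB 1 b l - qB (-1) b l| ≤ 1 := by
    intro b hb l
    have h1' := hqBnn 1 hpl b hb l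
    have h2' := hqBnn (-1) hm b hb l
    have h3' := hqBs b hb l
    rw [abs_le]; constructor <;> linarith
  have hS : (∑ l, p l * ((qA 1 0 l - qA (-1) 0 l) * (qB 1 0 l - qB (-1) 0 l)))
      + (∑ l, p l * ((qA 1 0 l - qA (-1) 0 l) * (qB 1 1 l - qB (-1) 1 l)))
      + (∑ l, p l * ((qA 1 1 l - qA (-1) 1 l) * (qB 1 0 l - qB (-1) 0 l)))
      - (∑ l, p l * ((qA 1 1 l - qA (-1) 1 l) * (qB 1 1 l - qB (-1) 1 l))) ≤ 2 := by
    have key : ∀ l, p l * ((qA 1 0 l - qA (-1) 0 l) * (qB 1 0 l - qB (-1) 0 l))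
        + p l * ((qA 1 0 l - qA (-1) 0 l) * (qB 1 1 l - qB (-1) 1 l))
        + p l * ((qA 1 1 l - qA (-1) 1 l) * (qB 1 0 l - qB (-1) 0 l))
        - p l * ((qA 1 1 l - qA (-1) 1 l) * (qB 1 1 l - qB (-1) 1 l)) ≤ 2 * p l := by
      intro l
      have := chsh_bound _ _ _ _ (hxb 0 h0 l) (hxb 1 h1 l) (hyb 0 h0 l) (hyb 1 h1 l)
      nlinarith [hp l]
    calc (∑ l, p l * ((qA 1 0 l - qA (-1) 0 l) * (qB 1 0 l - qB (-1) 0 l)))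
        + (∑ l, p l * ((qA 1 0 l - qA (-1) 0 l) * (qB 1 1 l - qB (-1) 1 l)))
        + (∑ l, p l * ((qA 1 1 l - qA (-1) 1 l) * (qB 1 0 l - qB (-1) 0 l)))
        - (∑ l, p l * ((qA 1 1 l - qA (-1) 1 l) * (qB 1 1 l - qB (-1) 1 l)))
        = ∑ l, (p l * ((qA 1 0 l - qA (-1) 0 l) * (qB 1 0 l - qB (-1) 0 l))
            + p l * ((qA 1 0 l - qA (-1) 0 l) * (qB 1 1 l - qB (-1) 1 l))
            + p l * ((qA 1 1 l - qA (-1) 1 l) * (qB 1 0 l - qB (-1) 0 l))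
            - p l * ((qA 1 1 l - qA (-1) 1 l) * (qB 1 1 l - qB (-1) 1 l))) := by
          rw [Finset.sum_sub_distrib, Finset.sum_add_distrib, Finset.sum_add_distrib]
      _ ≤ ∑ l, 2 * p l := Finset.sum_le_sum fun l _ => key l
      _ = 2 := by rw [← Finset.mul_sum, hps]; ring
  -- quantum value
  have hne : (1:ℝ) ≠ -1 := by norm_num
  have hne' : (-1:ℝ) ≠ 1 := by norm_num
  have hq : ∀ a b : ℝ, q5 1 1 a b - q5 1 (-1) a b - q5 (-1) 1 a b + q5 (-1) (-1) a b
      = s / 2 * (1 - 2 * a * b) := by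
    intro a b
    simp only [q5, if_pos rfl, if_neg hne, if_neg hne', ← hsdef, ite_true]
    ring
  rw [E00, E01, E10, E11, hq, hq, hq, hq] at hS
  nlinarith [hS, hs2, hs0]
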